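/- arXiv:2505.09177 — 5 statements merged into one kernel-verified Lean document; each statement's English description precedes it below -/
import Mathlib

section
/- Let I be a compact interval and f : I → I a continuous surjective map. For every open set U containing A(f) (the union of the α-limit sets of all points of I), there exists a natural number M such that for every point x ∈ I and every backward orbit branch (x_n)_{n≥0} of x, at most M terms of the sequence (x_n) lie outside U. -/
open Filter Topology

/-- `g` is a backward orbit branch for `f`: `f (g (n+1)) = g n` for all `n`. -/
def IsBackwardBranch {X : Type*} (f : X → X) (g : ℕ → X) : Prop :=
  ∀ n : ℕ, f (g (n + 1)) = g n

/-- `g` is a preimage sequence of `x` for `f`: `f^[n] (g n) = x` for all `n`. -/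
def IsPreimageSeq {X : Type*} (f : X → X) (x : X) (g : ℕ → X) : Prop :=
  ∀ n : ℕ, f^[n] (g n) = x

/-- The set of limit points of a sequence `g`. -/
def limitPts {X : Type*} [TopologicalSpace X] (g : ℕ → X) : Set X :=
  {y | ∃ φ : ℕ → ℕ, StrictMono φ ∧ Filter.Tendsto (fun i => g (φ i)) Filter.atTop (nhds y)}

/-- The ω-limit set of a point `x`. -/
def omegaSet {X : Type*} [TopologicalSpace X] (f : X → X) (x : X) : Set X :=
  limitPts fun n => f^[n] x

/-- The α-limit set of a point `x`: limit points of preimage sequences of `x`. -/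
def alphaSet {X : Type*} [TopologicalSpace X] (f : X → X) (x : X) : Set X :=
  {y | ∃ g : ℕ → X, IsPreimageSeq f x g ∧ y ∈ limitPts g}

/-- The special α-limit set of a point `x`: limit points of backward orbit branches of `x`. -/
def sAlphaSet {X : Type*} [TopologicalSpace X] (f : X → X) (x : X) : Set X :=
  {y | ∃ g : ℕ → X, g 0 = x ∧ IsBackwardBranch f g ∧ y ∈ limitPts g}

/-- `A(f)`: the union of the α-limit sets of all points. -/
def bigA {X : Type*} [TopologicalSpace X] (f : X → X) : Set X := ⋃ x, alphaSet f x

/-- `SA(f)`: the union of the special α-limit sets of all points. -/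
def bigSA {X : Type*} [TopologicalSpace X] (f : X → X) : Set X := ⋃ x, sAlphaSet f x

/-- `ω(f)`: the union of the ω-limit sets of all points. -/
def omegaUnion {X : Type*} [TopologicalSpace X] (f : X → X) : Set X := ⋃ x, omegaSet f x

/-- The set of recurrent points of `f`. -/
def recPts {X : Type*} [TopologicalSpace X] (f : X → X) : Set X :=
  {x | ∀ U ∈ nhds x, ∃ n : ℕ, 1 ≤ n ∧ f^[n] x ∈ U}

/-- The set of non-wandering points of `f`. -/
def nwPts {X : Type*} [TopologicalSpace X] (f : X → X) : Set X :=
  {x | ∀ U ∈ nhds x, ∃ n : ℕ, 1 ≤ n ∧ (f^[n] '' U ∩ U).Nonempty}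

/-- The set of periodic points of `f`. -/
def perPts {X : Type*} (f : X → X) : Set X :=
  {p | ∃ k : ℕ, 1 ≤ k ∧ f^[k] p = p}

open Set Function

/-!
A periodic point is its own α-limit point. At a non-periodic non-wandering point `y`, returns of
the shrinking intervals `D k` around `y` take longer and longer, and their images
`f^[n k] '' D k` are intervals meeting `D k`. Either some point lies in infinitely many of these
images, and `y` is an α-limit point of it; or the images shrink to `y`, and a chain of them nested
into each other has a common point whose preimages accumulate at `y`. So every non-wandering point
lies in `A(f)`, the complement of `U` is a compact set of wandering points, it is covered by
finitely many wandering neighbourhoods, and a backward branch visits each of these at most once.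
-/

section

variable {X : Type*} {f : X → X}

theorem IsBackwardBranch.iterate_apply {g : ℕ → X} (hg : IsBackwardBranch f g) (n m : ℕ) :
    f^[m] (g (n + m)) = g n := by
  induction m with
  | zero => rfl
  | succ m ih => rw [iterate_succ_apply, ← add_assoc, hg, ih]

theorem IsBackwardBranch.eq_of_mem_wandering {g : ℕ → X} (hg : IsBackwardBranch f g) {V : Set X}
    (hV : ∀ n, 1 ≤ n → ¬(f^[n] '' V ∩ V).Nonempty) {n m : ℕ} (hn : g n ∈ V) (hm : g m ∈ V) :
    n = m := by
  wlog hnm : n < m generalizing n m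
  · rcases (not_lt.1 hnm).lt_or_eq with h | h
    · exact (this hm hn h).symm
    · exact h.symm
  refine absurd ⟨g n, ⟨g m, hm, ?_⟩, hn⟩ (hV (m - n) (by omega))
  simpa [Nat.add_sub_cancel' hnm.le] using hg.iterate_apply n (m - n)

theorem exists_card_le_of_isCompact_of_disjoint_nwPts [TopologicalSpace X] {K : Set X}
    (hK : IsCompact K) (hKw : Disjoint K (nwPts f)) :
    ∃ M : ℕ, ∀ g : ℕ → X, IsBackwardBranch f g →
      ∀ s : Finset ℕ, (∀ n ∈ s, g n ∈ K) → s.card ≤ M := by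
  classical
  have hwand : ∀ y ∈ K, ∃ V ∈ 𝓝 y, ∀ n, 1 ≤ n → ¬(f^[n] '' V ∩ V).Nonempty := by
    intro y hy
    simpa [nwPts] using hKw.notMem_of_mem_left hy
  choose! V hVy hVw using hwand
  obtain ⟨t, htK, hKt⟩ := hK.elim_nhds_subcover V hVy
  refine ⟨t.card, fun g hg s hs => ?_⟩
  have : Nonempty X := ⟨g 0⟩
  have hcov : ∀ n ∈ s, ∃ x ∈ t, g n ∈ V x := fun n hn => by simpa using hKt (hs n hn)
  choose! i hit hgi using hcov
  refine Finset.card_le_card_of_injOn i hit fun n hn m hm hnm => ?_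
  exact hg.eq_of_mem_wandering (hVw _ (htK _ (hit n hn))) (hgi n hn) (hnm ▸ hgi m hm)

theorem mem_bigA_of_tendsto [TopologicalSpace X] (hsurj : Surjective f) {v y : X} {d : ℕ → ℕ}
    (hd : StrictMono d) {w : ℕ → X} (hw : ∀ r, f^[d r] (w r) = v)
    (hwy : Tendsto w atTop (𝓝 y)) : y ∈ bigA f := by
  choose z hz using fun n => hsurj.iterate n v
  refine mem_iUnion.2 ⟨v, extend d w z, fun n => ?_, d, hd, ?_⟩
  · by_cases hn : ∃ r, d r = n
    · obtain ⟨r, rfl⟩ := hn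
      rw [hd.injective.extend_apply]
      exact hw r
    · rw [extend_apply' _ _ _ hn]
      exact hz n
  · simpa only [hd.injective.extend_apply] using hwy

theorem perPts_subset_bigA [TopologicalSpace X] (hsurj : Surjective f) : perPts f ⊆ bigA f := by
  rintro y ⟨k, hk, hky⟩
  refine mem_bigA_of_tendsto (v := y) (w := fun _ => y) hsurj (strictMono_mul_left_of_pos hk)
    (fun r => ?_) tendsto_const_nhds
  rw [iterate_mul]
  exact iterate_fixed hky r

theorem exists_lt_iterate_mem_of_mem_nwPts [TopologicalSpace X] [T2Space X] (hf : Continuous f)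
    {y : X} (hy : y ∈ nwPts f) (hper : y ∉ perPts f) {V : Set X} (hV : V ∈ 𝓝 y) (N : ℕ) :
    ∃ n, N < n ∧ ∃ z ∈ V, f^[n] z ∈ V := by
  have hfar : ∀ j ∈ Finset.Icc 1 N, ∀ᶠ p in 𝓝 y ×ˢ 𝓝 y, f^[j] p.1 ≠ p.2 := by
    intro j hj
    rw [← nhds_prod_eq]
    refine ((hf.iterate j).continuousAt.comp continuousAt_fst).ne_iff_eventually_ne
      continuousAt_snd |>.1 fun h => hper ⟨j, (Finset.mem_Icc.1 hj).1, h⟩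
  obtain ⟨W, hW, hWfar⟩ := eventually_prod_self_iff
    (r := fun z z' => (z ∈ V ∧ z' ∈ V) ∧ ∀ j ∈ Finset.Icc 1 N, f^[j] z ≠ z') |>.1 <|
    (Eventually.prod_mk hV hV).and ((Finset.Icc 1 N).eventually_all.2 hfar)
  obtain ⟨n, hn, _, ⟨z, hz, rfl⟩, hnz⟩ := hy W hW
  obtain ⟨⟨hzV, hnzV⟩, hzfar⟩ := hWfar z hz _ hnz
  refine ⟨n, ?_, z, hzV, hnzV⟩
  by_contra! hnN
  exact hzfar n (Finset.mem_Icc.2 ⟨hn, hnN⟩) rfl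

theorem exists_forall_iterate_sum_eq [TopologicalSpace X] [T2Space X] (hf : Continuous f)
    {V : ℕ → Set X} (hVc : ∀ r, IsCompact (V r)) (hVne : ∀ r, (V r).Nonempty) {m : ℕ → ℕ}
    (hm : ∀ r, f^[m r] '' V (r + 1) ⊆ V r) :
    ∃ v, ∀ r, ∃ x ∈ V r, f^[∑ i ∈ Finset.range r, m i] x = v := by
  set T : ℕ → ℕ := fun r => ∑ i ∈ Finset.range r, m i
  have hQc : ∀ r, IsCompact (f^[T r] '' V r) := fun r => (hVc r).image (hf.iterate _)
  have hQ : ∀ r, f^[T (r + 1)] '' V (r + 1) ⊆ f^[T r] '' V r := fun r => by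
    simp only [T, Finset.sum_range_succ, iterate_add, image_comp]
    exact image_mono (hm r)
  obtain ⟨v, hv⟩ := IsCompact.nonempty_iInter_of_sequence_nonempty_isCompact_isClosed
    (fun r => f^[T r] '' V r) hQ (fun r => (hVne r).image _) (hQc 0) fun r => (hQc r).isClosed
  exact ⟨v, fun r => mem_iInter.1 hv r⟩

variable [TopologicalSpace X] {y : X} {D : ℕ → Set X} {n : ℕ → ℕ}

theorem mem_bigA_of_frequently_mem_iterate_image (hsurj : Surjective f)
    (hD : Tendsto D atTop (𝓝 y).smallSets) (hn : StrictMono n) {v : X}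
    (hv : ∃ᶠ k in atTop, v ∈ f^[n k] '' D k) : y ∈ bigA f := by
  obtain ⟨ψ, hψ, hvψ⟩ := extraction_of_frequently_atTop hv
  choose w hwD hwv using hvψ
  exact mem_bigA_of_tendsto hsurj (hn.comp hψ) hwv
    ((hD.comp hψ.tendsto_atTop).of_smallSets (Eventually.of_forall hwD))

theorem mem_bigA_of_tendsto_iterate_image [T2Space X] (hf : Continuous f)
    (hsurj : Surjective f) (hDy : ∀ k, D k ∈ 𝓝 y) (hDc : ∀ k, IsCompact (D k))
    (hD : Tendsto D atTop (𝓝 y).smallSets) (hn : StrictMono n)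
    (hJ : Tendsto (fun k => f^[n k] '' D k) atTop (𝓝 y).smallSets) : y ∈ bigA f := by
  have hnext : ∀ j, ∃ k, j < k ∧ f^[n k] '' D k ⊆ D j := fun j =>
    ((eventually_gt_atTop j).and (tendsto_smallSets_iff.1 hJ _ (hDy j))).exists
  choose next hlt hsub using hnext
  set κ : ℕ → ℕ := fun r => next^[r] 0
  have hκ : StrictMono κ := strictMono_nat_of_lt_succ fun r => by
    simpa only [κ, iterate_succ_apply'] using hlt (κ r)
  have hm : ∀ r, f^[n (κ (r + 1))] '' D (κ (r + 1)) ⊆ D (κ r) := fun r => by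
    simpa only [κ, iterate_succ_apply'] using hsub (κ r)
  obtain ⟨v, hv⟩ := exists_forall_iterate_sum_eq hf (fun r => hDc (κ r))
    (fun r => ⟨y, mem_of_mem_nhds (hDy _)⟩) hm
  choose x hxD hxv using hv
  have hT : StrictMono fun r => ∑ i ∈ Finset.range r, n (κ (i + 1)) :=
    strictMono_nat_of_lt_succ fun r => by
      rw [Finset.sum_range_succ]
      have := hn (hκ (Nat.lt_add_one r))
      omega
  exact mem_bigA_of_tendsto hsurj hT hxv
    ((hD.comp hκ.tendsto_atTop).of_smallSets (Eventually.of_forall hxD))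

end

theorem Set.OrdConnected.subset_Ioo {α : Type*} [LinearOrder α] {J : Set α} (hJ : J.OrdConnected)
    {u p q : α} (hu : u ∈ J) (hpq : u ∈ Ioo p q) (hp : p ∉ J) (hq : q ∉ J) : J ⊆ Ioo p q := by
  intro z hz
  constructor
  · by_contra! hzp
    exact hp (hJ.out hz hu ⟨hzp, hpq.1.le⟩)
  · by_contra! hqz
    exact hq (hJ.out hu hz ⟨hpq.2.le, hqz⟩)

namespace Real

variable {S : Set ℝ}

theorem frequently_mem_or_tendsto_smallSets {ι : Type*} {l : Filter ι} {K : ι → Set S}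
    (hK : ∀ k, IsPreconnected (K k)) {u : ι → S} (hu : ∀ k, u k ∈ K k) {y : S}
    (huy : Tendsto u l (𝓝 y)) : (∃ v, ∃ᶠ k in l, v ∈ K k) ∨ Tendsto K l (𝓝 y).smallSets := by
  refine or_iff_not_imp_left.2 fun hK' => tendsto_smallSets_iff.2 fun t ht => ?_
  push Not at hK'
  have hJ : ∀ k, (Subtype.val '' K k).OrdConnected := fun k =>
    ((hK k).image _ continuous_subtype_val.continuousOn).ordConnected
  have hout : ∀ p : ℝ, ∀ᶠ k in l, p ∉ Subtype.val '' K k := by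
    intro p
    by_cases hp : p ∈ S
    · filter_upwards [hK' ⟨p, hp⟩] with k hk
      rintro ⟨x, hx, rfl⟩
      exact hk hx
    · exact Eventually.of_forall fun k ⟨x, _, hxp⟩ => hp (hxp ▸ x.2)
  obtain ⟨ε, hε, hball⟩ := Metric.mem_nhds_iff.1 ht
  have hu' : ∀ᶠ k in l, (u k : ℝ) ∈ Ioo (y - ε) (y + ε) :=
    (continuous_subtype_val.tendsto y |>.comp huy) (Ioo_mem_nhds (by linarith) (by linarith))
  filter_upwards [hout (y - ε), hout (y + ε), hu'] with k hp hq hk x hx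
  have hxI := (hJ k).subset_Ioo (mem_image_of_mem _ (hu k)) hk hp hq (mem_image_of_mem _ hx)
  apply hball
  rw [Metric.mem_ball, Subtype.dist_eq, Real.dist_eq, abs_sub_lt_iff]
  constructor <;> linarith [hxI.1, hxI.2]

theorem isPreconnected_closedBall [S.OrdConnected] (y : S) (r : ℝ) :
    IsPreconnected (Metric.closedBall y r) := by
  rw [← Topology.IsInducing.subtypeVal.isPreconnected_image, Subtype.image_closedBall,
    ofPred_mem_eq, Real.closedBall_eq_Icc]
  exact (inferInstance : (Icc _ _ ∩ S).OrdConnected).isPreconnected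

theorem nwPts_subset_bigA [CompactSpace S] [S.OrdConnected] {f : S → S} (hf : Continuous f)
    (hsurj : Surjective f) : nwPts f ⊆ bigA f := by
  intro y hy
  by_cases hper : y ∈ perPts f
  · exact perPts_subset_bigA hsurj hper
  set D : ℕ → Set S := fun k => Metric.closedBall y (1 / (k + 1))
  have hDy : ∀ k, D k ∈ 𝓝 y := fun k => Metric.closedBall_mem_nhds y (by positivity)
  have hD : Tendsto D atTop (𝓝 y).smallSets :=
    (tendsto_closedBall_smallSets y).comp tendsto_one_div_add_atTop_nhds_zero_nat
  obtain ⟨n, hn, hret⟩ : ∃ n : ℕ → ℕ, StrictMono n ∧ ∀ k, ∃ w ∈ D k, f^[n k] w ∈ D k :=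
    extraction_forall_of_frequently fun k => frequently_atTop'.2 <|
      exists_lt_iterate_mem_of_mem_nwPts hf hy hper (hDy k)
  choose w hwD hwret using hret
  rcases frequently_mem_or_tendsto_smallSets
      (fun k => (isPreconnected_closedBall y _).image _ (hf.iterate (n k)).continuousOn)
      (fun k => mem_image_of_mem _ (hwD k)) (hD.of_smallSets (Eventually.of_forall hwret))
    with ⟨v, hv⟩ | hJ
  · exact mem_bigA_of_frequently_mem_iterate_image hsurj hD hn hv
  · exact mem_bigA_of_tendsto_iterate_image hf hsurj hDy
      (fun k => Metric.isClosed_closedBall.isCompact) hD hn hJ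

end Real

theorem birkhoff_for_alpha_general {a b : ℝ} (f : Set.Icc a b → Set.Icc a b)
    (hf : Continuous f) (hsurj : Function.Surjective f)
    (U : Set (Set.Icc a b)) (hU : IsOpen U) (hAU : bigA f ⊆ U) :
    ∃ M : ℕ, ∀ g : ℕ → Set.Icc a b, IsBackwardBranch f g →
      ∀ s : Finset ℕ, (∀ n ∈ s, g n ∉ U) → s.card ≤ M := by
  have hwand : Disjoint Uᶜ (nwPts f) :=
    disjoint_compl_left_iff_subset.2 ((Real.nwPts_subset_bigA hf hsurj).trans hAU)
  exact exists_card_le_of_isCompact_of_disjoint_nwPts hU.isClosed_compl.isCompact hwand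

theorem birkhoff_for_alpha {a b : ℝ} (hab : a ≤ b) (f : Set.Icc a b → Set.Icc a b)
    (hf : Continuous f) (hsurj : Function.Surjective f)
    (U : Set (Set.Icc a b)) (hU : IsOpen U) (hAU : bigA f ⊆ U) :
    ∃ M : ℕ, ∀ g : ℕ → Set.Icc a b, IsBackwardBranch f g →
      ∀ s : Finset ℕ, (∀ n ∈ s, g n ∉ U) → s.card ≤ M :=
  birkhoff_for_alpha_general f hf hsurj U hU hAU
end

section
/- Let X be a compact metric space and f : X → X a continuous map. For every open set U containing the set NW(f) of non-wandering points of f, there exists a natural number n such that for every x ∈ X, at most n terms of the forward trajectory (f^j(x))_{j≥0} lie outside U. -/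
open Filter Topology

theorem birkhoff_nonwandering {X : Type*} [MetricSpace X] [CompactSpace X]
    (f : X → X) (hf : Continuous f)
    (U : Set X) (hU : IsOpen U) (hNWU : nwPts f ⊆ U) :
    ∃ n : ℕ, ∀ x : X, ∀ s : Finset ℕ, (∀ j ∈ s, f^[j] x ∉ U) → s.card ≤ n := by
  -- Every point outside U is wandering: it has a neighborhood never returning.
  have hw : ∀ x : X, x ∉ U → ∃ V ∈ nhds x, ∀ n : ℕ, 1 ≤ n → (f^[n] '' V ∩ V) = ∅ := by
    intro x hx
    have hxnw : x ∉ nwPts f := fun h => hx (hNWU h)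
    simp only [nwPts, Set.mem_setOf_eq, not_forall] at hxnw
    obtain ⟨V, hV, hV2⟩ := hxnw
    push_neg at hV2
    exact ⟨V, hV, fun n hn => hV2 n hn⟩
  choose! V hV1 hV2 using hw
  -- X \ U is compact; cover it by finitely many such neighborhoods.
  have hK : IsCompact Uᶜ := hU.isClosed_compl.isCompact
  obtain ⟨t, htK, htcov⟩ := hK.elim_nhds_subcover V (fun x hx => hV1 x hx)
  refine ⟨t.card, fun x s hs => ?_⟩
  -- assign to each visit time j some member of t whose neighborhood contains f^[j] x
  have hpick : ∀ j : ℕ, ∃ p : X, j ∈ s → p ∈ t ∧ f^[j] x ∈ V p := by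
    intro j
    by_cases hj : j ∈ s
    · have : f^[j] x ∈ ⋃ p ∈ t, V p := htcov (hs j hj)
      simp only [Set.mem_iUnion] at this
      obtain ⟨q, hq, hq2⟩ := this
      exact ⟨q, fun _ => ⟨hq, hq2⟩⟩
    · exact ⟨x, fun h => absurd h hj⟩
  choose p hp using hpick
  have hp1 : ∀ j ∈ s, p j ∈ t := fun j hj => (hp j hj).1
  have hp2 : ∀ j ∈ s, f^[j] x ∈ V (p j) := fun j hj => (hp j hj).2
  -- this assignment is injective, since each V p is visited at most once
  have key : ∀ j ∈ s, ∀ k ∈ s, j < k → p j ≠ p k := by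
    intro j hj k hk hjk heq
    have hpU : (p j : X) ∉ U := htK (p j) (hp1 j hj)
    have h1 : f^[j] x ∈ V (p j) := hp2 j hj
    have h2 : f^[k] x ∈ V (p j) := heq ▸ hp2 k hk
    have h3 : f^[k] x = f^[k - j] (f^[j] x) := by
      rw [← Function.iterate_add_apply, Nat.sub_add_cancel hjk.le]
    have h4 : f^[k] x ∈ f^[k - j] '' V (p j) ∩ V (p j) :=
      ⟨⟨f^[j] x, h1, h3.symm⟩, h2⟩
    have h5 := hV2 (p j) hpU (k - j) (by omega)
    rw [h5] at h4
    exact h4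
  refine Finset.card_le_card_of_injOn p (fun j hj => hp1 j hj) ?_
  intro j hj k hk heq
  by_contra hne
  rcases lt_or_gt_of_ne hne with h | h
  · exact key j hj k hk h heq
  · exact key k hk j hj h heq.symm
end

section
/- Let I be a compact interval, f : I → I a continuous map, and P a periodic orbit of f (the forward orbit of a periodic point). If α(x) ∩ P ≠ ∅ for some point x ∈ I, then P ⊆ sα(x). -/
/-!
Some point `Q` of `P` is, by pigeonhole on residues modulo `k`, an α-limit point of `x` for
`F = f^[k]`, and `F` fixes `Q`; say preimages of `x` accumulate at `Q` from the left. If `x ≤ Q`,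
or if preimages of `x` also accumulate at `Q` from the right and `Q ≤ x`, the intermediate value
theorem on `[z, Q]` for such preimages `z` gives every point between `x` and `Q` preimages
arbitrarily close to `Q`. Otherwise `x > Q` and there is a gap `[Q, v]` that no orbit to `x`
visits, so these orbits jump from below `Q` to above `v`; by continuity of `F` at `Q` the jump
starts below some fixed `l < Q`, and the intermediate value theorem again gives each point of
`[l, Q]` preimages close to `Q`. Chaining such preimages yields a backward branch of `x`
accumulating at `Q`. Backward branches of `F` interpolate to backward branches of `f`, and
`sα(x)` is forward invariant, so it contains the orbit `P` of `Q`.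
-/

open Filter Topology

open Set Function

theorem Nat.exists_lt_and_not_succ {p : ℕ → Prop} {n : ℕ} (h0 : p 0) (hn : ¬p n) :
    ∃ s < n, p s ∧ ¬p (s + 1) := by
  induction n with
  | zero => exact absurd h0 hn
  | succ n ih =>
    by_cases h : p n
    · exact ⟨n, n.lt_succ_self, h, hn⟩
    · obtain ⟨s, hs, hps⟩ := ih h
      exact ⟨s, hs.trans n.lt_succ_self, hps⟩

section Branches

variable {X : Type*} {f : X → X}

theorem exists_isBackwardBranch_of_chain {e : ℕ → X} {N : ℕ → ℕ} (hN : StrictMono N)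
    (he : ∀ r, f^[N (r + 1) - N r] (e (r + 1)) = e r) :
    ∃ h : ℕ → X, IsBackwardBranch f h ∧ ∀ r, h (N r) = e r := by
  have chain : ∀ r s, r ≤ s → f^[N s - N r] (e s) = e r := by
    intro r s hrs
    induction s, hrs using Nat.le_induction with
    | base => simp
    | succ s hrs ih =>
      have := hN.monotone hrs
      have := hN (Nat.lt_add_one s)
      rw [show N (s + 1) - N r = (N s - N r) + (N (s + 1) - N s) by omega,
        iterate_add_apply, he, ih]
  refine ⟨fun n => f^[N (n + 1) - n] (e (n + 1)), fun n => ?_, fun r => ?_⟩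
  · have := hN.le_apply (x := n + 1)
    have : N (n + 1) < N (n + 1 + 1) := hN (by omega)
    rw [← iterate_succ_apply' f, show (N (n + 1 + 1) - (n + 1)).succ =
      (N (n + 1) - n) + (N (n + 1 + 1) - N (n + 1)) by omega, iterate_add_apply, he]
  · have := hN.le_apply (x := N r + 1)
    have := hN.le_apply (x := r)
    exact chain r (N r + 1) (by omega)

theorem sAlphaSet_iterate_subset [TopologicalSpace X] {k : ℕ} (hk : 0 < k) (x : X) :
    sAlphaSet f^[k] x ⊆ sAlphaSet f x := by
  rintro y ⟨h, h0, hh, φ, hφ, hlim⟩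
  have hmul : StrictMono (k * ·) := fun _ _ hrs => Nat.mul_lt_mul_of_pos_left hrs hk
  obtain ⟨h', hh', hh'k⟩ := exists_isBackwardBranch_of_chain hmul
    (e := h) fun r => by simpa [Nat.mul_succ] using hh r
  exact ⟨h', by simpa [h0] using hh'k 0, hh', (k * φ ·), hmul.comp hφ,
    by simpa only [hh'k] using hlim⟩

theorem mapsTo_sAlphaSet [TopologicalSpace X] (hf : Continuous f) (x : X) :
    MapsTo f (sAlphaSet f x) (sAlphaSet f x) := by
  rintro y ⟨h, h0, hh, φ, hφ, hlim⟩
  have hpos : ∀ i, 1 ≤ φ (i + 1) := fun i => (Nat.zero_le _).trans_lt (hφ i.lt_succ_self)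
  refine ⟨h, h0, hh, fun i => φ (i + 1) - 1, fun i j hij => ?_, ?_⟩
  · have : φ (i + 1) < φ (j + 1) := hφ (by omega)
    have := hpos i
    dsimp only
    omega
  · have hshift : ∀ i, h (φ (i + 1) - 1) = f (h (φ (i + 1))) := fun i => by
      conv_rhs => rw [← Nat.sub_add_cancel (hpos i), hh]
    simp only [hshift]
    exact (hf.tendsto y).comp (hlim.comp (tendsto_add_atTop_nat 1))

def HasPreimagesNear [TopologicalSpace X] (f : X → X) (T : Set X) (q : X) : Prop :=
  ∀ e ∈ T, ∀ U ∈ 𝓝 q, ∃ m, 1 ≤ m ∧ ∃ w ∈ T ∩ U, f^[m] w = e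

theorem HasPreimagesNear.mem_sAlphaSet [TopologicalSpace X] [FirstCountableTopology X]
    {T : Set X} {q x : X} (hT : HasPreimagesNear f T q) (hx : x ∈ T) : q ∈ sAlphaSet f x := by
  obtain ⟨u, hu⟩ := (𝓝 q).exists_antitone_basis
  choose! m hm w hwTu hw using fun e (he : e ∈ T) r => hT e he (u r) (hu.mem r)
  let e : ℕ → X := fun r => Nat.rec x (fun r y => w y r) r
  have heT : ∀ r, e r ∈ T := fun r => by
    induction r with
    | zero => exact hx
    | succ r ih => exact (hwTu _ ih r).1
  let N : ℕ → ℕ := fun r => ∑ i ∈ Finset.range r, m (e i) i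
  have hN : ∀ r, N (r + 1) = N r + m (e r) r := fun r => Finset.sum_range_succ _ r
  have hNmono : StrictMono N := strictMono_nat_of_lt_succ fun r => by
    have := hm _ (heT r) r
    rw [hN]
    omega
  obtain ⟨h, hh, hhN⟩ := exists_isBackwardBranch_of_chain hNmono (e := e) fun r => by
    rw [hN, Nat.add_sub_cancel_left]
    exact hw _ (heT r) r
  refine ⟨h, hhN 0, hh, fun r => N (r + 1), hNmono.comp (strictMono_id.add_const 1), ?_⟩
  simpa only [hhN] using hu.tendsto fun r => (hwTu _ (heT r) r).2

end Branches

theorem Filter.Frequently.exists_mem_Ioo_of_nhdsLT {X : Type*} [LinearOrder X] [TopologicalSpace X]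
    [ClosedIicTopology X] {p : X → Prop} {Q : X} (h : ∃ᶠ z in 𝓝[<] Q, p z) {l : X} (hl : l < Q) :
    ∃ z ∈ Ioo l Q, p z :=
  let ⟨z, hz, hzI⟩ := (h.and_eventually (Ioo_mem_nhdsLT hl)).exists
  ⟨z, hzI, hz⟩

section IntervalMaps

variable {X : Type*} [ConditionallyCompleteLinearOrder X] [TopologicalSpace X] [OrderTopology X]
  [DenselyOrdered X] [FirstCountableTopology X] {g : X → X} {Q x : X}

theorem mem_sAlphaSet_of_le_of_frequently_left (hg : Continuous g) (hQ : IsFixedPt g Q)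
    (hxQ : x ≤ Q) (hleft : ∃ᶠ z in 𝓝[<] Q, ∃ m, 1 ≤ m ∧ g^[m] z = x) : Q ∈ sAlphaSet g x := by
  refine HasPreimagesNear.mem_sAlphaSet (T := Icc x Q) ?_ ⟨le_rfl, hxQ⟩
  intro e he U hU
  rcases he.2.eq_or_lt with rfl | heQ
  · exact ⟨1, le_rfl, e, ⟨he, mem_of_mem_nhds hU⟩, hQ⟩
  obtain ⟨l, hlQ, hlU⟩ := exists_Ioc_subset_of_mem_nhds hU ⟨e, heQ⟩
  obtain ⟨z, hz, m, hm, hzx⟩ := hleft.exists_mem_Ioo_of_nhdsLT (max_lt heQ hlQ)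
  have hsurj := ((hg.iterate m).continuousOn (s := Icc z Q)).surjOn_Icc
    (left_mem_Icc.2 hz.2.le) (right_mem_Icc.2 hz.2.le)
  rw [hzx, iterate_fixed hQ] at hsurj
  obtain ⟨w, hw, hwe⟩ := hsurj he
  have hzw : max e l < w := hz.1.trans_le hw.1
  exact ⟨m, hm, w, ⟨⟨he.1.trans ((le_max_left e l).trans hzw.le), hw.2⟩,
    hlU ⟨(le_max_right e l).trans_lt hzw, hw.2⟩⟩, hwe⟩

theorem mem_sAlphaSet_of_ge_of_frequently_right (hg : Continuous g) (hQ : IsFixedPt g Q)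
    (hQx : Q ≤ x) (hright : ∃ᶠ z in 𝓝[>] Q, ∃ m, 1 ≤ m ∧ g^[m] z = x) : Q ∈ sAlphaSet g x :=
  mem_sAlphaSet_of_le_of_frequently_left (X := Xᵒᵈ) hg hQ hQx hright

theorem mem_sAlphaSet_of_frequently_left_of_gap {v : X} (hg : Continuous g) (hQ : IsFixedPt g Q)
    (hQv : Q < v) (hvx : v < x) (hgap : ∀ y ∈ Icc Q v, ∀ m, 1 ≤ m → g^[m] y ≠ x)
    (hleft : ∃ᶠ z in 𝓝[<] Q, ∃ m, 1 ≤ m ∧ g^[m] z = x) : Q ∈ sAlphaSet g x := by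
  obtain ⟨z₀, -, hz₀⟩ := (hleft.and_eventually self_mem_nhdsWithin).exists
  obtain ⟨l, hlQ, hl⟩ := exists_Ioc_subset_of_mem_nhds
    (hg.continuousAt.preimage_mem_nhds (Iio_mem_nhds (hQ.symm ▸ hQv))) ⟨z₀, hz₀⟩
  -- An orbit from `Ioo l Q` to `x` must jump over `Icc Q v`, and only points `≤ l` can jump.
  have hjump : ∀ z ∈ Ioo l Q, ∀ n, g^[n] z = x → ∃ s, 1 ≤ s ∧ g^[s] z ≤ l := by
    intro z hz n hzx
    obtain ⟨s, hsn, hs, hs₁⟩ := Nat.exists_lt_and_not_succ (p := fun s => g^[s] z < Q) (n := n)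
      hz.2 (by simpa [hzx] using (hQv.trans hvx).le)
    have hv : v < g^[s + 1] z := by
      refine lt_of_not_ge fun hle => ?_
      rcases (Nat.succ_le_of_lt hsn).eq_or_lt with hn | hn
      · rw [Nat.succ_eq_add_one] at hn
        rw [hn, hzx] at hle
        exact hle.not_gt hvx
      · refine hgap _ ⟨not_lt.1 hs₁, hle⟩ (n - (s + 1)) (by omega) ?_
        rw [← iterate_add_apply, Nat.sub_add_cancel hn.le, hzx]
    have hsl : g^[s] z ≤ l := by
      refine not_lt.1 fun hls => (hl ⟨hls, hs.le⟩ : g (g^[s] z) < v).not_gt ?_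
      rwa [← iterate_succ_apply' g]
    exact ⟨s, Nat.one_le_iff_ne_zero.2 fun h0 => (h0 ▸ hsl).not_gt hz.1, hsl⟩
  refine HasPreimagesNear.mem_sAlphaSet (T := insert x (Icc l Q)) ?_ (mem_insert x _)
  intro e he U hU
  obtain ⟨l', hl'Q, hl'U⟩ := exists_Ioc_subset_of_mem_nhds hU ⟨l, hlQ⟩
  obtain ⟨z, hz, m, hm, hzx⟩ := hleft.exists_mem_Ioo_of_nhdsLT (max_lt hlQ hl'Q)
  have hzl : z ∈ Ioo l Q := ⟨(le_max_left l l').trans_lt hz.1, hz.2⟩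
  have hzU : Icc z Q ⊆ U := fun w hw =>
    hl'U ⟨(le_max_right l l').trans_lt (hz.1.trans_le hw.1), hw.2⟩
  have hzT : Icc z Q ⊆ Icc l Q := Icc_subset_Icc_left hzl.1.le
  rcases he with rfl | he
  · exact ⟨m, hm, z, ⟨mem_insert_of_mem _ (hzT (left_mem_Icc.2 hz.2.le)),
      hzU (left_mem_Icc.2 hz.2.le)⟩, hzx⟩
  obtain ⟨s, hs, hsl⟩ := hjump z hzl m hzx
  have hsurj := ((hg.iterate s).continuousOn (s := Icc z Q)).surjOn_Icc
    (left_mem_Icc.2 hz.2.le) (right_mem_Icc.2 hz.2.le)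
  rw [iterate_fixed hQ] at hsurj
  obtain ⟨w, hw, hwe⟩ := hsurj ⟨hsl.trans he.1, he.2⟩
  exact ⟨s, hs, w, ⟨mem_insert_of_mem _ (hzT hw), hzU hw⟩, hwe⟩

theorem mem_sAlphaSet_of_frequently_left (hg : Continuous g) (hQ : IsFixedPt g Q)
    (hleft : ∃ᶠ z in 𝓝[<] Q, ∃ m, 1 ≤ m ∧ g^[m] z = x) : Q ∈ sAlphaSet g x := by
  rcases le_or_gt x Q with hxQ | hQx
  · exact mem_sAlphaSet_of_le_of_frequently_left hg hQ hxQ hleft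
  by_cases hright : ∃ᶠ z in 𝓝[>] Q, ∃ m, 1 ≤ m ∧ g^[m] z = x
  · exact mem_sAlphaSet_of_ge_of_frequently_right hg hQ hQx.le hright
  obtain ⟨v₀, hQv₀, hv₀⟩ := (mem_nhdsGT_iff_exists_Ioo_subset' hQx).1 (not_frequently.1 hright)
  obtain ⟨v, hQv, hv⟩ := exists_between (lt_min hQv₀ hQx)
  refine mem_sAlphaSet_of_frequently_left_of_gap hg hQ hQv (hv.trans_le (min_le_right _ _))
    ?_ hleft
  rintro y ⟨hQy, hyv⟩ m hm rfl
  rcases hQy.eq_or_lt with rfl | hQy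
  · exact hQx.ne (iterate_fixed hQ m).symm
  · exact hv₀ ⟨hQy, hyv.trans_lt (hv.trans_le (min_le_left _ _))⟩ ⟨m, hm, rfl⟩

theorem mem_sAlphaSet_of_frequently_right (hg : Continuous g) (hQ : IsFixedPt g Q)
    (hright : ∃ᶠ z in 𝓝[>] Q, ∃ m, 1 ≤ m ∧ g^[m] z = x) : Q ∈ sAlphaSet g x :=
  mem_sAlphaSet_of_frequently_left (X := Xᵒᵈ) hg hQ hright

theorem mem_sAlphaSet_of_mem_alphaSet (hg : Continuous g) (hQ : IsFixedPt g Q)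
    (hα : Q ∈ alphaSet g x) : Q ∈ sAlphaSet g x := by
  by_cases hxQ : x = Q
  · subst hxQ
    exact ⟨fun _ => x, rfl, fun _ => hQ, id, strictMono_id, tendsto_const_nhds⟩
  obtain ⟨G, hG, φ, hφ, hlim⟩ := hα
  have hne : ∀ i, G (φ i) ∈ ({Q}ᶜ : Set X) := fun i hi =>
    hxQ (by rw [← hG (φ i), mem_singleton_iff.1 hi, iterate_fixed hQ])
  have hpre : ∃ᶠ z in 𝓝[≠] Q, ∃ m, 1 ≤ m ∧ g^[m] z = x :=
    (tendsto_nhdsWithin_iff.2 ⟨hlim, .of_forall hne⟩).frequently <| Eventually.frequently <|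
      eventually_atTop.2 ⟨1, fun i hi => ⟨φ i, hi.trans hφ.le_apply, hG _⟩⟩
  rw [← nhdsLT_sup_nhdsGT, frequently_sup] at hpre
  exact hpre.elim (mem_sAlphaSet_of_frequently_left hg hQ)
    (mem_sAlphaSet_of_frequently_right hg hQ)

end IntervalMaps

theorem exists_iterate_mem_alphaSet_iterate {X : Type*} [TopologicalSpace X] {f : X → X}
    (hf : Continuous f) {k : ℕ} (hk : 0 < k) {x : X} (q : X) (hq : q ∈ alphaSet f x) :
    ∃ c, f^[c] q ∈ alphaSet f^[k] x := by
  obtain ⟨G, hG, φ, hφ, hlim⟩ := hq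
  obtain ⟨c, hc⟩ : ∃ c : Fin k, ∃ᶠ i in atTop, φ i % k = c :=
    frequently_exists.1 (.of_forall fun i => ⟨⟨φ i % k, Nat.mod_lt _ hk⟩, rfl⟩)
  obtain ⟨ψ, hψ, hψc⟩ := extraction_of_frequently_atTop hc
  have hdiv : ∀ i, k * (φ (ψ i) / k) + c = φ (ψ i) := fun i => hψc i ▸ Nat.div_add_mod _ _
  refine ⟨c, fun n => f^[c] (G (k * n + c)), fun n => ?_, fun i => φ (ψ i) / k,
    fun i j hij => ?_, ?_⟩
  · rw [← iterate_mul, ← iterate_add_apply, hG]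
  · have := hφ (hψ hij)
    rw [← hdiv i, ← hdiv j] at this
    exact Nat.lt_of_mul_lt_mul_left (Nat.lt_of_add_lt_add_right this)
  · simp only [hdiv]
    exact ((hf.iterate c).tendsto q).comp (hlim.comp hψ.tendsto_atTop)

theorem Function.IsPeriodicPt.exists_iterate_eq {X : Type*} {f : X → X} {p : X} {k : ℕ}
    (hp : IsPeriodicPt f k p) (hk : 0 < k) (i j : ℕ) : ∃ t, f^[t] (f^[i] p) = f^[j] p := by
  refine ⟨j + (k - 1) * i, ?_⟩
  rw [← iterate_add_apply, show j + (k - 1) * i + i = j + k * i by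
    rw [add_assoc, ← Nat.succ_mul, Nat.succ_eq_add_one, Nat.sub_add_cancel hk], iterate_add_apply,
    (hp.mul_const i).eq]

theorem periodic_orbit_meets_alpha_imp_sub_salpha {a b : ℝ} (hab : a ≤ b)
    (f : Set.Icc a b → Set.Icc a b) (hf : Continuous f)
    (p : Set.Icc a b) (k : ℕ) (hk : 1 ≤ k) (hp : f^[k] p = p)
    (P : Set (Set.Icc a b)) (hP : P = Set.range fun n => f^[n] p)
    (x : Set.Icc a b) (hx : (alphaSet f x ∩ P).Nonempty) :
    P ⊆ sAlphaSet f x := by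
  have : Fact (a ≤ b) := ⟨hab⟩
  subst hP
  obtain ⟨_, hqα, n, rfl⟩ := hx
  obtain ⟨c, hc⟩ := exists_iterate_mem_alphaSet_iterate hf hk (f^[n] p) hqα
  have hfix : IsFixedPt f^[k] (f^[c] (f^[n] p)) :=
    (IsPeriodicPt.apply_iterate hp n).apply_iterate c
  have hmem := sAlphaSet_iterate_subset hk x (mem_sAlphaSet_of_mem_alphaSet (hf.iterate k) hfix hc)
  rintro _ ⟨j, rfl⟩
  dsimp only
  obtain ⟨t, ht⟩ := IsPeriodicPt.exists_iterate_eq hp hk (c + n) j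
  rw [iterate_add_apply] at ht
  exact ht ▸ (mapsTo_sAlphaSet hf x).iterate t hmem
end

section
/- Let I be a compact interval, f : I → I a continuous map, and let Orb(J_0) ⊇ Orb(J_1) ⊇ … be a nested sequence of cycles of intervals for f whose periods tend to infinity. Set Q = ⋂_n Orb(J_n). If x ∈ I is a point with α(x) ∩ Q ≠ ∅, then x ∈ Q. -/
open Filter Topology

/-!
Suppose `y ∈ α(x) ∩ Q` but `x ∉ Orb(J_n)`. Since `Orb(J_n)` is forward invariant, the preimages
of `x` stay outside it, so every point `f^N(y)` lies in `Orb(J_n)` but in the closure of its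
complement, i.e. at an endpoint of one of its finitely many intervals. Hence the forward orbit of
`y` is eventually periodic, `f^{N₁}(y) = f^{N₂}(y)` with `N₁ < N₂`. But `y` lies in cycles of
intervals of arbitrarily large period, and in a cycle of period `p` this forces `p ∣ N₂ - N₁`.
-/

open Set Function

theorem iterate_mem_diff_interior_of_mem_alphaSet {X : Type*} [TopologicalSpace X] {f : X → X}
    (hf : Continuous f) {U : Set X} (hU : MapsTo f U U) {x y : X} (hx : x ∉ U)
    (hy : y ∈ alphaSet f x) (hyU : y ∈ U) (N : ℕ) :
    f^[N] y ∈ U \ interior U := by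
  obtain ⟨g, hg, φ, hφ, hlim⟩ := hy
  have hclosure : f^[N] y ∈ closure Uᶜ := by
    refine mem_closure_of_tendsto (((hf.iterate N).tendsto y).comp hlim) ?_
    filter_upwards [eventually_ge_atTop N] with i hi hmem
    apply hx
    have := hU.iterate (φ i - N) hmem
    rwa [comp_apply, ← iterate_add_apply, Nat.sub_add_cancel (hi.trans hφ.le_apply), hg] at this
  exact ⟨hU.iterate N hyU, by rwa [closure_compl] at hclosure⟩

theorem Set.OrdConnected.finite_diff_interior {α : Type*} [LinearOrder α] [TopologicalSpace α]
    [OrderTopology α] {S : Set α} (hS : S.OrdConnected) : (S \ interior S).Finite := by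
  have hsub : S \ interior S ⊆ {z | IsLeast S z} ∪ {z | IsGreatest S z} := by
    rintro z ⟨hzS, hzi⟩
    by_contra hz
    simp only [mem_union, mem_ofPred_eq, IsLeast, IsGreatest, hzS, true_and, not_or,
      mem_lowerBounds, mem_upperBounds, not_forall, not_le] at hz
    obtain ⟨⟨s₁, hs₁, h₁⟩, ⟨s₂, hs₂, h₂⟩⟩ := hz
    exact hzi (interior_maximal (Ioo_subset_Icc_self.trans (hS.out hs₁ hs₂)) isOpen_Ioo ⟨h₁, h₂⟩)
  refine (Finite.union ?_ ?_).subset hsub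
  · exact Subsingleton.finite fun _ h₁ _ h₂ => h₁.unique h₂
  · exact Subsingleton.finite fun _ h₁ _ h₂ => h₁.unique h₂

section CycleOfIntervals

variable {X : Type*} {f : X → X} {J : Set X} {p : ℕ}

def cycleOrbit (f : X → X) (J : Set X) (p : ℕ) : Set X :=
  ⋃ i ∈ Finset.range p, f^[i] '' J

theorem image_iterate_subset_image_iterate_mod (hinv : f^[p] '' J ⊆ J) (k : ℕ) :
    f^[k] '' J ⊆ f^[k % p] '' J := by
  have hmul : MapsTo f^[p * (k / p)] J J := by
    rw [iterate_mul]
    exact (mapsTo_iff_image_subset.2 hinv).iterate _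
  conv_lhs => rw [← Nat.mod_add_div k p, iterate_add, image_comp]
  exact image_mono hmul.image_subset

theorem mapsTo_cycleOrbit (hinv : f^[p] '' J ⊆ J) :
    MapsTo f (cycleOrbit f J p) (cycleOrbit f J p) := by
  intro z hz
  obtain ⟨i, hi, w, hw, rfl⟩ := mem_iUnion₂.1 hz
  rw [← iterate_succ_apply' f i w]
  have hp : 0 < p := Nat.zero_lt_of_lt (Finset.mem_range.1 hi)
  exact mem_iUnion₂.2 ⟨(i + 1) % p, Finset.mem_range.2 (Nat.mod_lt _ hp),
    image_iterate_subset_image_iterate_mod hinv _ (mem_image_of_mem _ hw)⟩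

theorem le_sub_of_iterate_eq_iterate (hinv : f^[p] '' J ⊆ J)
    (hdisj : ∀ i < p, ∀ j < p, i ≠ j → Disjoint (f^[i] '' J) (f^[j] '' J))
    {y : X} (hy : y ∈ cycleOrbit f J p) {N₁ N₂ : ℕ} (hlt : N₁ < N₂)
    (heq : f^[N₁] y = f^[N₂] y) : p ≤ N₂ - N₁ := by
  obtain ⟨k, hk, w, hw, rfl⟩ := mem_iUnion₂.1 hy
  have hp : 0 < p := Nat.zero_lt_of_lt (Finset.mem_range.1 hk)
  have hmem (N : ℕ) : f^[N] (f^[k] w) ∈ f^[(N + k) % p] '' J :=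
    image_iterate_subset_image_iterate_mod hinv (N + k) ⟨w, hw, iterate_add_apply f N k w⟩
  have hmod : (N₁ + k) % p = (N₂ + k) % p := by
    by_contra hne
    exact disjoint_left.1 (hdisj _ (Nat.mod_lt _ hp) _ (Nat.mod_lt _ hp) hne) (hmem N₁)
      (heq ▸ hmem N₂)
  have hdvd : p ∣ (N₂ + k) - (N₁ + k) := (Nat.modEq_iff_dvd' (by omega)).1 hmod
  rw [Nat.add_sub_add_right] at hdvd
  exact Nat.le_of_dvd (by omega) hdvd

theorem finite_cycleOrbit_diff_interior [LinearOrder X] [TopologicalSpace X] [OrderTopology X]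
    (hf : Continuous f) (hJ : IsPreconnected J) :
    (cycleOrbit f J p \ interior (cycleOrbit f J p)).Finite := by
  refine ((Finset.range p).finite_toSet.biUnion fun i _ =>
    (hJ.image _ (hf.iterate i).continuousOn).ordConnected.finite_diff_interior).subset ?_
  rintro z ⟨hz, hzi⟩
  obtain ⟨i, hi, hzi'⟩ := mem_iUnion₂.1 hz
  exact mem_iUnion₂.2 ⟨i, hi, hzi', fun h => hzi (interior_mono (subset_biUnion_of_mem hi) h)⟩

end CycleOfIntervals

theorem alpha_meets_solenoid_imp_mem_general {a b : ℝ} (f : Set.Icc a b → Set.Icc a b)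
    (hf : Continuous f) (J : ℕ → Set (Set.Icc a b)) (p : ℕ → ℕ)
    (hJ : ∀ n : ℕ, ∃ c d : Set.Icc a b, c ≤ d ∧ J n = Set.Icc c d)
    (hinv : ∀ n : ℕ, f^[p n] '' J n ⊆ J n)
    (hdisj : ∀ n : ℕ, ∀ i < p n, ∀ j < p n, i ≠ j → Disjoint (f^[i] '' J n) (f^[j] '' J n))
    (Orb : ℕ → Set (Set.Icc a b))
    (hOrb : ∀ n : ℕ, Orb n = ⋃ i ∈ Finset.range (p n), f^[i] '' J n)
    (hperiods : Filter.Tendsto p Filter.atTop Filter.atTop)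
    (Q : Set (Set.Icc a b)) (hQ : Q = ⋂ n : ℕ, Orb n)
    (x : Set.Icc a b) (hx : (alphaSet f x ∩ Q).Nonempty) :
    x ∈ Q := by
  obtain ⟨y, hyα, hyQ⟩ := hx
  have hyOrb : ∀ n, y ∈ cycleOrbit f (J n) (p n) := by
    intro n
    rw [cycleOrbit, ← hOrb n]
    exact mem_iInter.1 (hQ ▸ hyQ) n
  rw [hQ, mem_iInter]
  intro n
  rw [hOrb n]
  by_contra hxn
  have : Fact (a ≤ b) := ⟨x.2.1.trans x.2.2⟩
  have hJn : IsPreconnected (J n) := by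
    obtain ⟨c, d, -, hcd⟩ := hJ n
    exact hcd ▸ isPreconnected_Icc
  obtain ⟨N₁, N₂, hlt, heq⟩ :=
    (finite_cycleOrbit_diff_interior hf hJn).exists_lt_map_eq_of_forall_mem <|
      iterate_mem_diff_interior_of_mem_alphaSet hf (mapsTo_cycleOrbit (hinv n)) hxn hyα (hyOrb n)
  obtain ⟨m, hm⟩ := (hperiods.eventually_gt_atTop (N₂ - N₁)).exists
  exact (le_sub_of_iterate_eq_iterate (hinv m) (hdisj m) (hyOrb m) hlt heq).not_gt hm

theorem alpha_meets_solenoid_imp_mem {a b : ℝ} (hab : a ≤ b) (f : Set.Icc a b → Set.Icc a b)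
    (hf : Continuous f) (J : ℕ → Set (Set.Icc a b)) (p : ℕ → ℕ)
    (hJ : ∀ n : ℕ, ∃ c d : Set.Icc a b, c ≤ d ∧ J n = Set.Icc c d)
    (hp : ∀ n : ℕ, 1 ≤ p n)
    (hinv : ∀ n : ℕ, f^[p n] '' J n ⊆ J n)
    (hdisj : ∀ n : ℕ, ∀ i < p n, ∀ j < p n, i ≠ j → Disjoint (f^[i] '' J n) (f^[j] '' J n))
    (Orb : ℕ → Set (Set.Icc a b))
    (hOrb : ∀ n : ℕ, Orb n = ⋃ i ∈ Finset.range (p n), f^[i] '' J n)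
    (hnest : ∀ n : ℕ, Orb (n + 1) ⊆ Orb n)
    (hperiods : Filter.Tendsto p Filter.atTop Filter.atTop)
    (Q : Set (Set.Icc a b)) (hQ : Q = ⋂ n : ℕ, Orb n)
    (x : Set.Icc a b) (hx : (alphaSet f x ∩ Q).Nonempty) :
    x ∈ Q :=
  alpha_meets_solenoid_imp_mem_general f hf J p hJ hinv hdisj Orb hOrb hperiods Q hQ x hx
end

section
/- Let I be a compact interval and f : I → I a continuous map. Then the closure of the set of periodic points of f equals the closure of the set of recurrent points of f: cl(Per(f)) = cl(Rec(f)). -/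
open Filter Topology

namespace CHaux

variable {a b : ℝ}

lemma ivt_subtype (hab : a ≤ b) {φ : Set.Icc a b → ℝ} (hφ : Continuous φ)
    (u v : Set.Icc a b) (h0 : (0:ℝ) ∈ Set.uIcc (φ u) (φ v)) :
    ∃ ξ : Set.Icc a b, (ξ:ℝ) ∈ Set.uIcc (u:ℝ) (v:ℝ) ∧ φ ξ = 0 := by
  have hψc : Continuous (φ ∘ Set.projIcc a b hab) := hφ.comp continuous_projIcc
  have h1 : (φ ∘ Set.projIcc a b hab) (u:ℝ) = φ u := by
    simp [Function.comp, Set.projIcc_val]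
  have h2 : (φ ∘ Set.projIcc a b hab) (v:ℝ) = φ v := by
    simp [Function.comp, Set.projIcc_val]
  have hsub := intermediate_value_uIcc (hψc.continuousOn (s := Set.uIcc (u:ℝ) (v:ℝ)))
  rw [h1, h2] at hsub
  obtain ⟨w, hw, hw0⟩ := hsub h0
  have hwab : w ∈ Set.Icc a b := by
    rcases Set.mem_uIcc.mp hw with ⟨h3, h4⟩ | ⟨h3, h4⟩
    · exact ⟨le_trans u.2.1 h3, le_trans h4 v.2.2⟩
    · exact ⟨le_trans v.2.1 h3, le_trans h4 u.2.2⟩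
  refine ⟨⟨w, hwab⟩, hw, ?_⟩
  rw [Function.comp, Set.projIcc_of_mem hab hwab] at hw0
  exact hw0

lemma abs_sub_le_of_mem_uIcc {w u v : ℝ} (h : w ∈ Set.uIcc u v) : |w - v| ≤ |u - v| := by
  rcases Set.mem_uIcc.mp h with ⟨h1, h2⟩ | ⟨h1, h2⟩ <;> rw [abs_sub_le_iff] <;>
    constructor <;> [skip; skip; skip; skip] <;> cases abs_cases (u - v) <;> nlinarith [abs_nonneg (u-v)]

lemma exists_fixedpt (hab : a ≤ b) {f : Set.Icc a b → Set.Icc a b} (hf : Continuous f)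
    (N : ℕ) (u v : Set.Icc a b)
    (hu : ((f^[N] u : Set.Icc a b) : ℝ) ≤ u) (hv : (v:ℝ) ≤ ((f^[N] v : Set.Icc a b) : ℝ)) :
    ∃ ξ : Set.Icc a b, (ξ:ℝ) ∈ Set.uIcc (u:ℝ) (v:ℝ) ∧ f^[N] ξ = ξ := by
  set φ : Set.Icc a b → ℝ := fun s => ((f^[N] s : Set.Icc a b) : ℝ) - (s:ℝ) with hφdef
  have hφ : Continuous φ := (continuous_subtype_val.comp (hf.iterate N)).sub continuous_subtype_val
  have h0 : (0:ℝ) ∈ Set.uIcc (φ u) (φ v) := by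
    rw [Set.mem_uIcc]
    left
    constructor
    · simp only [hφdef]; linarith
    · simp only [hφdef]; linarith
  obtain ⟨ξ, hmem, hξ⟩ := ivt_subtype hab hφ u v h0
  refine ⟨ξ, hmem, ?_⟩
  apply Subtype.ext
  simp only [hφdef] at hξ
  linarith

/-- Core lemma: a non-periodic point whose orbit returns arbitrarily closely from above
is in the closure of the periodic points. -/
lemma main_above (hab : a ≤ b) {f : Set.Icc a b → Set.Icc a b} (hf : Continuous f)
    {x : Set.Icc a b} (hxp : x ∉ perPts f)
    (AD : ∀ δ : ℝ, 0 < δ → ∃ n : ℕ, 1 ≤ n ∧ (x:ℝ) < ((f^[n] x : Set.Icc a b) : ℝ) ∧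
      ((f^[n] x : Set.Icc a b) : ℝ) < (x:ℝ) + δ) :
    x ∈ closure (perPts f) := by
  by_contra hcl
  rw [Metric.mem_closure_iff] at hcl
  push_neg at hcl
  obtain ⟨ε, hε, hper⟩ := hcl
  set r : ℝ := ε/2 with hrdef
  have hrpos : 0 < r := by positivity
  -- no periodic points within distance r of x
  have hfree : ∀ ξ : Set.Icc a b, |(ξ:ℝ) - (x:ℝ)| ≤ r → ∀ N, 1 ≤ N → f^[N] ξ ≠ ξ := by
    intro ξ hξ N hN hfix
    have h1 : ε ≤ dist x ξ := hper ξ ⟨N, hN, hfix⟩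
    rw [Subtype.dist_eq, Real.dist_eq] at h1
    rw [abs_sub_comm] at h1
    have : ε ≤ r := le_trans h1 hξ
    rw [hrdef] at this
    linarith
  -- the orbit never exactly returns
  have hox : ∀ N, 1 ≤ N → ((f^[N] x : Set.Icc a b) : ℝ) ≠ (x:ℝ) := by
    intro N hN h
    exact hxp ⟨N, hN, Subtype.ext h⟩
  -- H+ : an iterate that moves x up moves everything in the ball up
  have Hplus : ∀ N, 1 ≤ N → (x:ℝ) < ((f^[N] x : Set.Icc a b) : ℝ) →
      ∀ t : Set.Icc a b, |(t:ℝ) - (x:ℝ)| ≤ r → (t:ℝ) < ((f^[N] t : Set.Icc a b) : ℝ) := by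
    intro N hN hxN t ht
    by_contra hle
    push_neg at hle
    obtain ⟨ξ, hmem, hfix⟩ := exists_fixedpt hab hf N t x hle (le_of_lt hxN)
    exact hfree ξ (le_trans (abs_sub_le_of_mem_uIcc hmem) ht) N hN hfix
  -- base return
  obtain ⟨T, hT1, hTgt, hTlt⟩ := AD r hrpos
  -- returns at arbitrarily late times, at every scale
  have ADplus : ∀ η : ℝ, 0 < η → ∀ E : ℕ, ∃ n, E ≤ n ∧ 1 ≤ n ∧
      (x:ℝ) < ((f^[n] x : Set.Icc a b) : ℝ) ∧ ((f^[n] x : Set.Icc a b) : ℝ) < (x:ℝ) + η := by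
    intro η hη E
    set Q : ℕ → Prop := fun n => 1 ≤ n ∧ (x:ℝ) < ((f^[n] x : Set.Icc a b) : ℝ) ∧
      ((f^[n] x : Set.Icc a b) : ℝ) < (x:ℝ) + η with hQdef
    have base : ∃ n, Q n := by
      obtain ⟨n, h1, h2, h3⟩ := AD η hη
      exact ⟨n, h1, h2, h3⟩
    have stepQ : ∀ n, Q n → ∃ m, Q m ∧
        ((f^[m] x : Set.Icc a b) : ℝ) < ((f^[n] x : Set.Icc a b) : ℝ) := by
      intro n hn
      obtain ⟨h1, h2, h3⟩ := hn
      obtain ⟨m, hm1, hm2, hm3⟩ := AD (((f^[n] x : Set.Icc a b) : ℝ) - (x:ℝ)) (by linarith)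
      exact ⟨m, ⟨hm1, hm2, by linarith⟩, by linarith⟩
    choose g hg1 hg2 using stepQ
    obtain ⟨n₀, hn₀⟩ := base
    set c : ℕ → {n : ℕ // Q n} :=
      fun k => Nat.rec ⟨n₀, hn₀⟩ (fun _ prev => ⟨g prev.1 prev.2, hg1 prev.1 prev.2⟩) k with hcdef
    have hdec : ∀ k, ((f^[(c (k+1)).1] x : Set.Icc a b) : ℝ) < ((f^[(c k).1] x : Set.Icc a b) : ℝ) := by
      intro k
      exact hg2 (c k).1 (c k).2
    have hanti : StrictAnti (fun k => ((f^[(c k).1] x : Set.Icc a b) : ℝ)) :=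
      strictAnti_nat_of_succ_lt hdec
    have hinj : Function.Injective fun k => (c k).1 := by
      intro i j hij
      apply hanti.injective
      simp only at hij ⊢
      rw [hij]
    have hpig : ∃ k, E ≤ (c k).1 := by
      by_contra hcon
      push_neg at hcon
      have hcard := Fintype.card_le_of_injective
          (fun i : Fin (E+1) => (⟨(c i.1).1, hcon i.1⟩ : Fin E)) ?_
      · simp only [Fintype.card_fin] at hcard
        omega
      · intro i j hij
        have h2 : (c i.1).1 = (c j.1).1 := congrArg Fin.val hij
        exact Fin.ext (hinj h2)
    obtain ⟨k, hk⟩ := hpig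
    exact ⟨(c k).1, hk, (c k).2.1, (c k).2.2.1, (c k).2.2.2⟩
  -- a good residue class mod T
  obtain ⟨rr, hrrT, CLS⟩ : ∃ rr, rr < T ∧ ∀ η : ℝ, 0 < η → ∀ E : ℕ, ∃ n, E ≤ n ∧ 1 ≤ n ∧
      n % T = rr ∧ (x:ℝ) < ((f^[n] x : Set.Icc a b) : ℝ) ∧
      ((f^[n] x : Set.Icc a b) : ℝ) < (x:ℝ) + η := by
    by_contra hC
    push_neg at hC
    choose! η0 hη0 E0 hE0 using hC
    have hTne : (Finset.range T).Nonempty := Finset.nonempty_range_iff.mpr (by omega)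
    set ηmin : ℝ := (Finset.range T).inf' hTne η0 with hηmin
    have hηminpos : 0 < ηmin := by
      rw [hηmin, Finset.lt_inf'_iff]
      intro i hi
      exact hη0 i (Finset.mem_range.mp hi)
    set Emax : ℕ := (Finset.range T).sup E0 with hEmax
    obtain ⟨n, hnE, hn1, hngt, hnlt⟩ := ADplus ηmin hηminpos Emax
    have hmod : n % T < T := Nat.mod_lt _ (by omega)
    have hle : E0 (n % T) ≤ n :=
      le_trans (Finset.le_sup (Finset.mem_range.mpr hmod)) hnE
    have := hE0 (n % T) hmod n hle hn1 rfl hngt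
    have hinfle : ηmin ≤ η0 (n % T) :=
      Finset.inf'_le _ (Finset.mem_range.mpr hmod)
    linarith
  -- straddle supply
  have ST : ∃ e, 1 ≤ e ∧
      ((((f^[e] x : Set.Icc a b) : ℝ) ≤ (x:ℝ) ∧
        ((f^[T] x : Set.Icc a b) : ℝ) ≤ ((f^[e+T] x : Set.Icc a b) : ℝ)) ∨
       (((f^[T] x : Set.Icc a b) : ℝ) ≤ ((f^[e] x : Set.Icc a b) : ℝ) ∧
        ((f^[e+T] x : Set.Icc a b) : ℝ) ≤ (x:ℝ))) := by
    by_contra hST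
    have hC2 : ∀ e, 1 ≤ e → ((f^[T] x : Set.Icc a b):ℝ) ≤ ((f^[e] x : Set.Icc a b):ℝ) →
        (x:ℝ) < ((f^[e+T] x : Set.Icc a b):ℝ) := by
      intro e he h1
      by_contra h2
      push_neg at h2
      exact hST ⟨e, he, Or.inr ⟨h1, h2⟩⟩
    -- one-step up-preservation
    have step : ∀ θ, 1 ≤ θ → (x:ℝ) < ((f^[θ] x : Set.Icc a b):ℝ) →
        (x:ℝ) < ((f^[θ+T] x : Set.Icc a b):ℝ) := by
      intro θ hθ hgt
      rcases le_or_gt ((f^[θ] x : Set.Icc a b):ℝ) ((x:ℝ) + r) with hK | hK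
      · have habs : |((f^[θ] x : Set.Icc a b):ℝ) - (x:ℝ)| ≤ r := by
          rw [abs_of_pos (by linarith)]
          linarith
        have h3 := Hplus T hT1 hTgt (f^[θ] x) habs
        have h4 : f^[T] (f^[θ] x) = f^[θ+T] x := by
          rw [← Function.iterate_add_apply]
          congr 1
          omega
        rw [h4] at h3
        linarith
      · exact hC2 θ hθ (by linarith)
    -- progression along the arithmetic sequence
    have prog : ∀ m, 1 ≤ m → (x:ℝ) < ((f^[m] x : Set.Icc a b):ℝ) →
        ∀ i, (x:ℝ) < ((f^[m + i*T] x : Set.Icc a b):ℝ) := by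
      intro m hm hgt i
      induction i with
      | zero => simpa using hgt
      | succ i ih =>
        have h5 := step (m + i*T) (by omega) ih
        have harith : m + (i+1)*T = (m + i*T) + T := by ring
        rw [harith]
        exact h5
    -- two returns in the class with descending positions
    obtain ⟨m₁, hm₁E, hm₁1, hm₁T, hm₁gt, hm₁lt⟩ := CLS r hrpos 1
    obtain ⟨m₂, hm₂ge, hm₂1, hm₂T, hm₂gt, hm₂lt⟩ :=
      CLS (((f^[m₁] x : Set.Icc a b):ℝ) - (x:ℝ)) (by linarith) (m₁+1)
    have hm₁₂ : m₁ < m₂ := by omega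
    set γ := m₂ - m₁ with hγdef
    have hγ1 : 1 ≤ γ := by omega
    have hTdvd : T ∣ γ := by
      have hmodeq : m₁ % T = m₂ % T := by rw [hm₁T, hm₂T]
      exact (Nat.modEq_iff_dvd' (le_of_lt hm₁₂)).mp hmodeq
    have hγlt : ((f^[γ] x : Set.Icc a b):ℝ) < (x:ℝ) := by
      rcases lt_trichotomy ((f^[γ] x : Set.Icc a b):ℝ) (x:ℝ) with h | h | h
      · exact h
      · exact absurd h (hox γ hγ1)
      · exfalso
        have habs : |((f^[m₁] x : Set.Icc a b):ℝ) - (x:ℝ)| ≤ r := by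
          rw [abs_of_pos (by linarith)]
          linarith
        have h6 := Hplus γ hγ1 h (f^[m₁] x) habs
        have h7 : f^[γ] (f^[m₁] x) = f^[m₂] x := by
          rw [← Function.iterate_add_apply]
          congr 1
          omega
        rw [h7] at h6
        linarith
    -- continuity radius around x for f^[γ]
    have hopen : IsOpen {ξ : Set.Icc a b | ((f^[γ] ξ : Set.Icc a b):ℝ) < (x:ℝ)} :=
      isOpen_Iio.preimage (continuous_subtype_val.comp (hf.iterate γ))
    obtain ⟨ρ, hρpos, hρball⟩ := Metric.isOpen_iff.mp hopen x hγlt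
    -- a class return within the radius
    obtain ⟨m₃, hm₃E, hm₃1, hm₃T, hm₃gt, hm₃lt⟩ := CLS (min ρ r) (lt_min hρpos hrpos) 1
    have hball : f^[m₃] x ∈ Metric.ball x ρ := by
      rw [Metric.mem_ball, Subtype.dist_eq, Real.dist_eq, abs_of_pos (by linarith)]
      have := min_le_left ρ r
      linarith
    have h8 : ((f^[γ] (f^[m₃] x) : Set.Icc a b):ℝ) < (x:ℝ) := hρball hball
    have h9 : f^[γ] (f^[m₃] x) = f^[m₃ + γ] x := by
      rw [← Function.iterate_add_apply]
      congr 1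
      omega
    rw [h9] at h8
    obtain ⟨i, hi⟩ := hTdvd
    have h10 := prog m₃ hm₃1 hm₃gt i
    have harith2 : m₃ + i*T = m₃ + γ := by rw [hi]; ring
    rw [harith2] at h10
    linarith
  -- conclusion: periodic point in [x, f^[T] x]
  obtain ⟨e, he1, hcase⟩ := ST
  have hiter : f^[e] (f^[T] x) = f^[e+T] x := (Function.iterate_add_apply f e T x).symm
  rcases hcase with ⟨h1, h2⟩ | ⟨h1, h2⟩
  · obtain ⟨ξ, hmem, hfix⟩ := exists_fixedpt hab hf e x (f^[T] x) h1 (by rw [hiter]; exact h2)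
    refine hfree ξ ?_ e he1 hfix
    have := abs_sub_le_of_mem_uIcc (Set.uIcc_comm (x:ℝ) ((f^[T] x : Set.Icc a b):ℝ) ▸ hmem)
    rw [abs_of_pos (by linarith : (0:ℝ) < ((f^[T] x : Set.Icc a b):ℝ) - (x:ℝ))] at this
    linarith
  · obtain ⟨ξ, hmem, hfix⟩ := exists_fixedpt hab hf e (f^[T] x) x (by rw [hiter]; linarith) (le_of_lt (lt_of_lt_of_le hTgt h1))
    refine hfree ξ ?_ e he1 hfix
    have := abs_sub_le_of_mem_uIcc hmem
    rw [abs_of_pos (by linarith : (0:ℝ) < ((f^[T] x : Set.Icc a b):ℝ) - (x:ℝ))] at this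
    linarith



/-- The order-reversing involution of `Icc a b`. -/
def flipIcc (hab : a ≤ b) : Set.Icc a b → Set.Icc a b := fun t =>
  ⟨a + b - (t:ℝ), ⟨by have h1 := t.2.1; have h2 := t.2.2; linarith,
    by have h1 := t.2.1; have h2 := t.2.2; linarith⟩⟩

lemma flipIcc_val (hab : a ≤ b) (t : Set.Icc a b) :
    ((flipIcc hab t : Set.Icc a b) : ℝ) = a + b - (t:ℝ) := rfl

lemma flipIcc_continuous (hab : a ≤ b) : Continuous (flipIcc hab) :=
  Continuous.subtype_mk (continuous_const.sub continuous_subtype_val) _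

lemma flipIcc_flipIcc (hab : a ≤ b) (t : Set.Icc a b) : flipIcc hab (flipIcc hab t) = t := by
  apply Subtype.ext
  rw [flipIcc_val, flipIcc_val]
  ring

lemma flipIcc_inj (hab : a ≤ b) : Function.Injective (flipIcc hab) :=
  Function.LeftInverse.injective (flipIcc_flipIcc hab)

lemma flipIcc_iterate (hab : a ≤ b) (f g : Set.Icc a b → Set.Icc a b)
    (hg : ∀ s, g s = flipIcc hab (f (flipIcc hab s))) (n : ℕ) (t : Set.Icc a b) :
    g^[n] (flipIcc hab t) = flipIcc hab (f^[n] t) := by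
  induction n with
  | zero => rfl
  | succ n ih =>
    rw [Function.iterate_succ_apply', Function.iterate_succ_apply', ih, hg, flipIcc_flipIcc]

lemma flipIcc_perPts (hab : a ≤ b) (f g : Set.Icc a b → Set.Icc a b)
    (hg : ∀ s, g s = flipIcc hab (f (flipIcc hab s))) :
    ∀ q, q ∈ perPts g → flipIcc hab q ∈ perPts f := by
  rintro q ⟨k, hk, hq⟩
  refine ⟨k, hk, ?_⟩
  have h3 := flipIcc_iterate hab f g hg k (flipIcc hab q)
  rw [flipIcc_flipIcc, hq] at h3
  have h4 := congrArg (flipIcc hab) h3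
  rw [flipIcc_flipIcc] at h4
  exact h4.symm

end CHaux

theorem closure_per_eq_closure_rec {a b : ℝ} (hab : a ≤ b) (f : Set.Icc a b → Set.Icc a b)
    (hf : Continuous f) :
    closure (perPts f) = closure (recPts f) := by
  apply Set.Subset.antisymm
  · apply closure_mono
    intro p hp
    obtain ⟨k, hk, hpk⟩ := hp
    intro U hU
    exact ⟨k, hk, by rw [hpk]; exact mem_of_mem_nhds hU⟩
  · apply closure_minimal _ isClosed_closure
    intro x hx
    by_cases hxp : x ∈ perPts f
    · exact subset_closure hxp
    · have hrec : ∀ δ : ℝ, 0 < δ → ∃ n, 1 ≤ n ∧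
          ((f^[n] x : Set.Icc a b):ℝ) ≠ (x:ℝ) ∧ |((f^[n] x : Set.Icc a b):ℝ) - (x:ℝ)| < δ := by
        intro δ hδ
        obtain ⟨n, hn1, hn2⟩ := hx (Metric.ball x δ) (Metric.ball_mem_nhds _ hδ)
        refine ⟨n, hn1, fun h => hxp ⟨n, hn1, Subtype.ext h⟩, ?_⟩
        rw [Metric.mem_ball, Subtype.dist_eq, Real.dist_eq] at hn2
        exact hn2
      by_cases hAD : ∀ δ : ℝ, 0 < δ → ∃ n : ℕ, 1 ≤ n ∧ (x:ℝ) < ((f^[n] x : Set.Icc a b):ℝ) ∧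
          ((f^[n] x : Set.Icc a b):ℝ) < (x:ℝ) + δ
      · exact CHaux.main_above hab hf hxp hAD
      · push_neg at hAD
        obtain ⟨δ₀, hδ₀, hND⟩ := hAD
        have MD : ∀ δ : ℝ, 0 < δ → ∃ n, 1 ≤ n ∧
            (x:ℝ) - δ < ((f^[n] x : Set.Icc a b):ℝ) ∧ ((f^[n] x : Set.Icc a b):ℝ) < (x:ℝ) := by
          intro δ hδ
          obtain ⟨n, hn1, hne, habs⟩ := hrec (min δ δ₀) (lt_min hδ hδ₀)
          have h1 := abs_lt.mp habs
          rcases hne.lt_or_gt with h | h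
          · refine ⟨n, hn1, ?_, h⟩
            have := min_le_left δ δ₀
            linarith [h1.1]
          · exfalso
            have h2 := hND n hn1 h
            have := min_le_right δ δ₀
            linarith [h1.2]
        set g : Set.Icc a b → Set.Icc a b :=
          fun s => CHaux.flipIcc hab (f (CHaux.flipIcc hab s)) with hgdef
        have hgeq : ∀ s, g s = CHaux.flipIcc hab (f (CHaux.flipIcc hab s)) := fun s => rfl
        have hgc : Continuous g :=
          (CHaux.flipIcc_continuous hab).comp (hf.comp (CHaux.flipIcc_continuous hab))
        have hxg : CHaux.flipIcc hab x ∉ perPts g := by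
          rintro ⟨k, hk, hq⟩
          apply hxp
          refine ⟨k, hk, ?_⟩
          have h3 := CHaux.flipIcc_iterate hab f g hgeq k x
          rw [hq] at h3
          exact CHaux.flipIcc_inj hab h3.symm
        have hADg : ∀ δ : ℝ, 0 < δ → ∃ n : ℕ, 1 ≤ n ∧
            ((CHaux.flipIcc hab x : Set.Icc a b):ℝ) <
              ((g^[n] (CHaux.flipIcc hab x) : Set.Icc a b):ℝ) ∧
            ((g^[n] (CHaux.flipIcc hab x) : Set.Icc a b):ℝ) <
              ((CHaux.flipIcc hab x : Set.Icc a b):ℝ) + δ := by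
          intro δ hδ
          obtain ⟨n, hn1, hn2, hn3⟩ := MD δ hδ
          refine ⟨n, hn1, ?_, ?_⟩ <;>
            rw [CHaux.flipIcc_iterate hab f g hgeq n x, CHaux.flipIcc_val, CHaux.flipIcc_val] <;>
            linarith
        have hmem := CHaux.main_above hab hgc hxg hADg
        have h4 : x = CHaux.flipIcc hab (CHaux.flipIcc hab x) := (CHaux.flipIcc_flipIcc hab x).symm
        rw [h4]
        have h5 : CHaux.flipIcc hab '' closure (perPts g) ⊆
            closure (CHaux.flipIcc hab '' perPts g) :=
          image_closure_subset_closure_image (CHaux.flipIcc_continuous hab)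
        have h6 : CHaux.flipIcc hab '' perPts g ⊆ perPts f := by
          rintro q ⟨q', hq', rfl⟩
          exact CHaux.flipIcc_perPts hab f g hgeq q' hq'
        exact closure_mono h6 (h5 ⟨_, hmem, rfl⟩)
end
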